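/- If M is a dominating induced matching of G and v_1, v_2, v_3, u induce a diamond in G with P_3 (v_1, v_2, v_3) and u adjacent to all of v_1, v_2, v_3, then the mid-edge uv_2 belongs to M. -/
import Mathlib


/-- `M` is a dominating induced matching of `G`: `M ⊆ E(G)` and every edge of `G`
intersects (shares a vertex with) exactly one edge of `M`. -/
def IsDIM {V : Type*} (G : SimpleGraph V) (M : Set (Sym2 V)) : Prop :=
  M ⊆ G.edgeSet ∧ ∀ e ∈ G.edgeSet, ∃! f, f ∈ M ∧ ∃ v, v ∈ e ∧ v ∈ f

private lemma dim_unique {V : Type*} {G : SimpleGraph V} {M : Set (Sym2 V)}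
    (hM : IsDIM G M) {e f g : Sym2 V} (he : e ∈ G.edgeSet)
    (hf : f ∈ M) (hg : g ∈ M) (hfe : ∃ v, v ∈ e ∧ v ∈ f)
    (hge : ∃ v, v ∈ e ∧ v ∈ g) : f = g := by
  obtain ⟨d, _, hd⟩ := hM.2 e he
  rw [hd f ⟨hf, hfe⟩, hd g ⟨hg, hge⟩]

theorem stmt_8 {V : Type*} [Fintype V] (G : SimpleGraph V) (M : Set (Sym2 V))
    (hM : IsDIM G M) (v1 v2 v3 u : V)
    (h13 : v1 ≠ v3)
    (h12 : G.Adj v1 v2) (h23 : G.Adj v2 v3) (n13 : ¬ G.Adj v1 v3)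
    (hu1 : G.Adj u v1) (hu2 : G.Adj u v2) (hu3 : G.Adj u v3) :
    s(u, v2) ∈ M := by
  have e12 : s(v1, v2) ∈ G.edgeSet := h12
  have e23 : s(v2, v3) ∈ G.edgeSet := h23
  have eu1 : s(u, v1) ∈ G.edgeSet := hu1
  have eu2 : s(u, v2) ∈ G.edgeSet := hu2
  have eu3 : s(u, v3) ∈ G.edgeSet := hu3
  obtain ⟨f, ⟨hfM, w, hwe, hwf⟩, _⟩ := hM.2 _ eu2
  -- it suffices to show f = s(u, v2)
  suffices hfs : f = s(u, v2) by rwa [hfs] at hfM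
  rw [← Sym2.mem_and_mem_iff hu2.ne]
  rw [Sym2.mem_iff] at hwe
  rcases hwe with h | h <;> rw [h] at hwf
  · -- u ∈ f ; show v2 ∈ f
    refine ⟨hwf, ?_⟩
    obtain ⟨g, ⟨hgM, x, hxe, hxg⟩, _⟩ := hM.2 _ e12
    rw [Sym2.mem_iff] at hxe
    rcases hxe with h' | h' <;> rw [h'] at hxg
    · -- v1 ∈ g : then f = g via edge uv1, so f = s(u,v1)
      have hfg : f = g := dim_unique hM eu1 hfM hgM
        ⟨u, Sym2.mem_mk_left _ _, hwf⟩ ⟨v1, Sym2.mem_mk_right _ _, hxg⟩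
      subst hfg
      have hf1 : f = s(u, v1) := (Sym2.mem_and_mem_iff hu1.ne).mp ⟨hwf, hxg⟩
      -- now edge v2v3 gives a contradiction
      obtain ⟨h, ⟨hhM, y, hye, hyh⟩, _⟩ := hM.2 _ e23
      rw [Sym2.mem_iff] at hye
      exfalso
      rcases hye with h'' | h'' <;> rw [h''] at hyh
      · have hfh : f = h := dim_unique hM eu2 hfM hhM
          ⟨u, Sym2.mem_mk_left _ _, hwf⟩ ⟨v2, Sym2.mem_mk_right _ _, hyh⟩
        rw [← hfh, hf1, Sym2.mem_iff] at hyh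
        rcases hyh with h1 | h1
        · exact hu2.ne' h1
        · exact h12.ne h1.symm
      · have hfh : f = h := dim_unique hM eu3 hfM hhM
          ⟨u, Sym2.mem_mk_left _ _, hwf⟩ ⟨v3, Sym2.mem_mk_right _ _, hyh⟩
        rw [← hfh, hf1, Sym2.mem_iff] at hyh
        rcases hyh with h1 | h1
        · exact hu3.ne' h1
        · exact h13 h1.symm
    · -- v2 ∈ g : f = g via edge uv2
      have hfg : f = g := dim_unique hM eu2 hfM hgM
        ⟨u, Sym2.mem_mk_left _ _, hwf⟩ ⟨v2, Sym2.mem_mk_right _ _, hxg⟩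
      rw [hfg]; exact hxg
  · -- v2 ∈ f ; show u ∈ f
    refine ⟨?_, hwf⟩
    obtain ⟨k, ⟨hkM, x, hxe, hxk⟩, _⟩ := hM.2 _ eu1
    rw [Sym2.mem_iff] at hxe
    rcases hxe with h' | h' <;> rw [h'] at hxk
    · -- u ∈ k : f = k via edge uv2
      have hfk : f = k := dim_unique hM eu2 hfM hkM
        ⟨v2, Sym2.mem_mk_right _ _, hwf⟩ ⟨u, Sym2.mem_mk_left _ _, hxk⟩
      rw [hfk]; exact hxk
    · -- v1 ∈ k : f = k via edge v1v2, so f = s(v1, v2)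
      have hfk : f = k := dim_unique hM e12 hfM hkM
        ⟨v2, Sym2.mem_mk_right _ _, hwf⟩ ⟨v1, Sym2.mem_mk_left _ _, hxk⟩
      subst hfk
      have hf1 : f = s(v1, v2) := (Sym2.mem_and_mem_iff h12.ne).mp ⟨hxk, hwf⟩
      obtain ⟨h, ⟨hhM, y, hye, hyh⟩, _⟩ := hM.2 _ eu3
      rw [Sym2.mem_iff] at hye
      exfalso
      rcases hye with h'' | h'' <;> rw [h''] at hyh
      · have hfh : f = h := dim_unique hM eu2 hfM hhM
          ⟨v2, Sym2.mem_mk_right _ _, hwf⟩ ⟨u, Sym2.mem_mk_left _ _, hyh⟩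
        rw [← hfh, hf1, Sym2.mem_iff] at hyh
        rcases hyh with h1 | h1
        · exact hu1.ne h1
        · exact hu2.ne h1
      · have hfh : f = h := dim_unique hM e23 hfM hhM
          ⟨v2, Sym2.mem_mk_left _ _, hwf⟩ ⟨v3, Sym2.mem_mk_right _ _, hyh⟩
        rw [← hfh, hf1, Sym2.mem_iff] at hyh
        rcases hyh with h1 | h1
        · exact h13 h1.symm
        · exact h23.ne h1.symm
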